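/- Let g = (g₁,…,g_m) ∈ ℝ[X₁,…,Xₙ]^m and x ∈ S(g), and suppose there exists y ∈ S(g)∖{x} such that the segment conv{x, y} is contained in S(g). Set I := {i ∈ {1,…,m} : gᵢ(x) = 0} and suppose gᵢ is strictly quasiconcave at x for all i ∈ I. Let I_x := the ideal of ℝ[X₁,…,Xₙ] generated by X₁ − x₁, …, Xₙ − xₙ, and I_x² its second ideal power. Fix v ∈ ℝⁿ and define φ : ℝ[X₁,…,Xₙ] → ℝ by φ(p) := vᵀ(Hess p)(x)v. Then φ(q) ≥ 0 for every q ∈ M(g) ∩ I_x². -/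

import Mathlib

open MvPolynomial Finset

noncomputable section

/-- The subring of finite elements of a linearly ordered field. -/
def Ofin (R : Type) [Field R] [LinearOrder R] [IsStrictOrderedRing R] : Subring R where
  carrier := {a : R | ∃ N : ℕ, |a| ≤ (N : R)}
  zero_mem' := ⟨0, by simp⟩
  one_mem' := ⟨1, by simp⟩
  add_mem' := by
    rintro a b ⟨N, hN⟩ ⟨M, hM⟩
    exact ⟨N + M, by push_cast; exact (abs_add_le a b).trans (add_le_add hN hM)⟩
  mul_mem' := by
    rintro a b ⟨N, hN⟩ ⟨M, hM⟩
    refine ⟨N * M, ?_⟩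
    push_cast
    calc |a * b| = |a| * |b| := abs_mul a b
    _ ≤ (N : _) * (M : _) := mul_le_mul hN hM (abs_nonneg b) (Nat.cast_nonneg N)
  neg_mem' := by
    rintro a ⟨N, hN⟩
    exact ⟨N, by rwa [abs_neg]⟩

/-- A real closed extension field of `ℝ`: an order-preserving ring embedding `ι : ℝ →+* R`
such that every nonnegative element of `R` is a square and every polynomial over `R` of
odd degree has a root. -/
structure RealClosedExt (R : Type) [Field R] [LinearOrder R] [IsStrictOrderedRing R] where
  ι : ℝ →+* R
  mono : ∀ a b : ℝ, a ≤ b → ι a ≤ ι b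
  sq : ∀ a : R, 0 ≤ a → ∃ b : R, b ^ 2 = a
  oddRoot : ∀ p : Polynomial R, Odd p.natDegree → ∃ x : R, p.eval x = 0

/-- An infinitesimal element of a linearly ordered field. -/
def Infinitesimal {R : Type} [Field R] [LinearOrder R] [IsStrictOrderedRing R] (a : R) : Prop :=
  ∀ N : ℕ, 0 < N → |a| ≤ (N : R)⁻¹

/-- `st` is a standard part map if `a - ι (st a)` is infinitesimal for every finite `a`. -/
def IsStandardPart {R : Type} [Field R] [LinearOrder R] [IsStrictOrderedRing R] (e : RealClosedExt R) (st : R → ℝ) : Prop :=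
  ∀ a : R, a ∈ Ofin R → Infinitesimal (a - e.ι (st a))

/-- The embedding `ℝ →+* 𝒪_R` induced by `ι`. -/
def RealClosedExt.toOfin {R : Type} [Field R] [LinearOrder R] [IsStrictOrderedRing R] (e : RealClosedExt R) :
    ℝ →+* Ofin R where
  toFun r := ⟨e.ι r, by
    refine ⟨⌈|r|⌉₊, ?_⟩
    have h2 : |e.ι r| ≤ e.ι |r| := by
      rw [abs_le]
      constructor
      · have h := e.mono (-|r|) r (neg_abs_le r)
        rwa [map_neg] at h
      · exact e.mono r |r| (le_abs_self r)
    refine h2.trans ?_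
    have h3 := e.mono |r| (⌈|r|⌉₊ : ℝ) (Nat.le_ceil _)
    rwa [map_natCast] at h3⟩
  map_one' := Subtype.ext (map_one e.ι)
  map_mul' a b := Subtype.ext (map_mul e.ι a b)
  map_zero' := Subtype.ext (map_zero e.ι)
  map_add' a b := Subtype.ext (map_add e.ι a b)

/-- Quadratic module of a commutative ring. -/
def IsQuadraticModule {A : Type*} [CommRing A] (M : Set A) : Prop :=
  (0 : A) ∈ M ∧ (1 : A) ∈ M ∧ (∀ a ∈ M, ∀ b ∈ M, a + b ∈ M) ∧
    ∀ a : A, ∀ p ∈ M, a ^ 2 * p ∈ M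

/-- Archimedean subset of a commutative ring. -/
def IsArchimedean {A : Type*} [CommRing A] (M : Set A) : Prop :=
  ∀ a : A, ∃ N : ℕ, (N : A) + a ∈ M ∧ (N : A) - a ∈ M

/-- The ideal `I_x` generated by the `X i - x i`. -/
def idealAt {R : Type} [Field R] [LinearOrder R] [IsStrictOrderedRing R] {n : ℕ} (x : Fin n → Ofin R) :
    Ideal (MvPolynomial (Fin n) (Ofin R)) :=
  Ideal.span (Set.range fun i => X i - C (x i))

/-- The polynomial `u_x = (X₁-x₁)² + … + (Xₙ-xₙ)²` over `𝒪_R`. -/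
def uPolyO {R : Type} [Field R] [LinearOrder R] [IsStrictOrderedRing R] {n : ℕ} (x : Fin n → Ofin R) :
    MvPolynomial (Fin n) (Ofin R) :=
  ∑ i, (X i - C (x i)) ^ 2

/-- Evaluation of a polynomial with coefficients in `𝒪_R` at a point of `Rⁿ`. -/
def evalR {R : Type} [Field R] [LinearOrder R] [IsStrictOrderedRing R] {n : ℕ} (x : Fin n → R)
    (p : MvPolynomial (Fin n) (Ofin R)) : R :=
  eval₂ (Ofin R).subtype x p

/-- `vᵀ (Hess p)(x) v`, computed in `R`, for a real vector `v`. -/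
def hessQuadO {R : Type} [Field R] [LinearOrder R] [IsStrictOrderedRing R] (e : RealClosedExt R) {n : ℕ}
    (p : MvPolynomial (Fin n) (Ofin R)) (x : Fin n → Ofin R) (v : Fin n → ℝ) : R :=
  ∑ a, ∑ b, e.ι (v a) * ((eval x (pderiv a (pderiv b p)) : Ofin R) : R) * e.ι (v b)

/-- The set `S := {x ∈ ℝⁿ : st (p(x)) ≥ 0 for all p ∈ M}`. -/
def Sof {R : Type} [Field R] [LinearOrder R] [IsStrictOrderedRing R] (e : RealClosedExt R) (st : R → ℝ) {n : ℕ}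
    (M : Set (MvPolynomial (Fin n) (Ofin R))) : Set (Fin n → ℝ) :=
  {y | ∀ p ∈ M, 0 ≤ st (evalR (fun i => e.ι (y i)) p)}

/-- A state of `(I, M ∩ I, u)`: an `ℝ`-linear functional on `I`, nonnegative on `M ∩ I` and
normalized at `u` (encoded as a function on the polynomial ring whose values off `I`
are irrelevant). -/
def IsStateOn {R : Type} [Field R] [LinearOrder R] [IsStrictOrderedRing R] (e : RealClosedExt R) {n : ℕ}
    (M : Set (MvPolynomial (Fin n) (Ofin R))) (I : Ideal (MvPolynomial (Fin n) (Ofin R)))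
    (u : MvPolynomial (Fin n) (Ofin R)) (φ : MvPolynomial (Fin n) (Ofin R) → ℝ) : Prop :=
  (∀ p ∈ I, ∀ q ∈ I, φ (p + q) = φ p + φ q) ∧
  (∀ r : ℝ, ∀ p ∈ I, φ (C (e.toOfin r) * p) = r * φ p) ∧
  (∀ p ∈ I, p ∈ M → 0 ≤ φ p) ∧ φ u = 1

/-- A pure state: an extreme point of the state space (no two distinct states have it
as their midpoint). -/
def IsPureStateOn {R : Type} [Field R] [LinearOrder R] [IsStrictOrderedRing R] (e : RealClosedExt R) {n : ℕ}
    (M : Set (MvPolynomial (Fin n) (Ofin R))) (I : Ideal (MvPolynomial (Fin n) (Ofin R)))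
    (u : MvPolynomial (Fin n) (Ofin R)) (φ : MvPolynomial (Fin n) (Ofin R) → ℝ) : Prop :=
  IsStateOn e M I u φ ∧
    ∀ ψ₁ ψ₂, IsStateOn e M I u ψ₁ → IsStateOn e M I u ψ₂ →
      (∀ p ∈ I, φ p = (ψ₁ p + ψ₂ p) / 2) → ∀ p ∈ I, ψ₁ p = ψ₂ p

/-- A sum of squares in a commutative ring. -/
def IsSOS {A : Type*} [CommRing A] (p : A) : Prop :=
  ∃ (k : ℕ) (q : Fin k → A), p = ∑ i, (q i) ^ 2

/-- The basic closed semialgebraic set `S(g)`. -/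
def Sset {n m : ℕ} (g : Fin m → MvPolynomial (Fin n) ℝ) : Set (Fin n → ℝ) :=
  {x | ∀ i, 0 ≤ eval x (g i)}

/-- The quadratic module `M(g)` generated by `g` in `ℝ[X]`. -/
def QModGen {n m : ℕ} (g : Fin m → MvPolynomial (Fin n) ℝ) : Set (MvPolynomial (Fin n) ℝ) :=
  {f | ∃ (σ₀ : MvPolynomial (Fin n) ℝ) (σ : Fin m → MvPolynomial (Fin n) ℝ),
    IsSOS σ₀ ∧ (∀ i, IsSOS (σ i)) ∧ f = σ₀ + ∑ i, σ i * g i}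

/-- `g` extended by `g₀ := 1` (the index `none` corresponds to `g₀`). -/
def gext {n m : ℕ} (g : Fin m → MvPolynomial (Fin n) ℝ) :
    Option (Fin m) → MvPolynomial (Fin n) ℝ :=
  fun o => o.elim 1 g

/-- The `d`-truncated quadratic module `M_d(g)`: finite sums of terms `p² gᵢ`
(`g₀ := 1`), each of degree at most `d`. -/
def Mtrunc {n m : ℕ} (g : Fin m → MvPolynomial (Fin n) ℝ) (d : ℕ) :
    Set (MvPolynomial (Fin n) ℝ) :=
  {f | ∃ (k : ℕ) (idx : Fin k → Option (Fin m)) (p : Fin k → MvPolynomial (Fin n) ℝ),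
    (∀ j, ((p j) ^ 2 * gext g (idx j)).totalDegree ≤ d) ∧
      f = ∑ j, (p j) ^ 2 * gext g (idx j)}

/-- The polynomial `u_x = (X₁-x₁)² + … + (Xₙ-xₙ)²` over `ℝ`. -/
def uPoly {n : ℕ} (x : Fin n → ℝ) : MvPolynomial (Fin n) ℝ :=
  ∑ i, (X i - C (x i)) ^ 2

/-- The open Euclidean ball of radius `ε` around `x`. -/
def eball {n : ℕ} (x : Fin n → ℝ) (ε : ℝ) : Set (Fin n → ℝ) :=
  {y | ∑ i, (y i - x i) ^ 2 < ε ^ 2}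

/-- `vᵀ (Hess f)(x) v`, where `Hess f` is the formal Hessian matrix of `f`. -/
def hessQuad {n : ℕ} (f : MvPolynomial (Fin n) ℝ) (x : Fin n → ℝ) (v : Fin n → ℝ) : ℝ :=
  ∑ a, ∑ b, v a * eval x (pderiv a (pderiv b f)) * v b

/-- `(∇ f)(x)ᵀ v`. -/
def gradDot {n : ℕ} (f : MvPolynomial (Fin n) ℝ) (x v : Fin n → ℝ) : ℝ :=
  ∑ i, eval x (pderiv i f) * v i

/-- Strict quasiconcavity of `g` at `x`. -/
def StrictQuasiconcaveAt {n : ℕ} (g : MvPolynomial (Fin n) ℝ) (x : Fin n → ℝ) : Prop :=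
  ∀ v : Fin n → ℝ, v ≠ 0 → gradDot g x v = 0 → hessQuad g x v < 0

/-- The real zero set `Z(g)`. -/
def Zset {n : ℕ} (g : MvPolynomial (Fin n) ℝ) : Set (Fin n → ℝ) :=
  {x | eval x g = 0}

/-- The convex boundary `convbd S = S ∩ ∂(conv S)`. -/
def convbd {n : ℕ} (S : Set (Fin n → ℝ)) : Set (Fin n → ℝ) :=
  S ∩ frontier (convexHull ℝ S)

/-- The optimal value `las_d(f, g)` of the degree-`d` Lasserre relaxation. -/
def lasVal {n m : ℕ} (g : Fin m → MvPolynomial (Fin n) ℝ) (d : ℕ)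
    (f : MvPolynomial (Fin n) ℝ) : EReal :=
  ⨅ L : {L : MvPolynomial (Fin n) ℝ →ₗ[ℝ] ℝ // (∀ p ∈ Mtrunc g d, 0 ≤ L p) ∧ L 1 = 1},
    ((L.1 f : ℝ) : EReal)

/-- The degree-`d` Lasserre relaxation set `S_d(g)`. -/
def lasRelax {n m : ℕ} (g : Fin m → MvPolynomial (Fin n) ℝ) (d : ℕ) : Set (Fin n → ℝ) :=
  {y | ∃ L : MvPolynomial (Fin n) ℝ →ₗ[ℝ] ℝ,
    (∀ p ∈ Mtrunc g d, 0 ≤ L p) ∧ L 1 = 1 ∧ ∀ i, L (X i) = y i}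

end

/-!
Write `q = σ₀ + ∑ σᵢ gᵢ` with sums of squares `σᵢ`. Since `q ∈ I_x²`, both `q` and `∇q`
vanish at `x`. Evaluating at `x` gives `σ₀(x) = 0` and `σᵢ(x) gᵢ(x) = 0`. Along `w = y - x`,
every active `gᵢ` has `∇gᵢ(x)ᵀw > 0`: the restriction `t ↦ gᵢ(x + t w)` is nonnegative on
`[0, 1]` and vanishes at `0`, so a vanishing first derivative would force
`wᵀ(Hess gᵢ)(x)w ≥ 0`, against strict quasiconcavity. Hence `0 = ∇q(x)ᵀw = ∑ σᵢ(x) ∇gᵢ(x)ᵀw`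
forces `σᵢ(x) = 0` for all `i`. A sum of squares vanishing at `x` has zero gradient and
positive semidefinite Hessian there, so `(Hess q)(x) = (Hess σ₀)(x) + ∑ gᵢ(x) (Hess σᵢ)(x)`
is positive semidefinite.
-/

open Filter Topology

namespace Polynomial

variable {P : ℝ[X]}

theorem coeff_zero_nonneg_of_eventually_nonneg (h : ∀ᶠ t in 𝓝[>] (0 : ℝ), 0 ≤ P.eval t) :
    0 ≤ P.coeff 0 := by
  rw [coeff_zero_eq_eval_zero]
  exact ge_of_tendsto (P.continuous.tendsto 0 |>.mono_left nhdsWithin_le_nhds) h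

theorem eventually_divX_nonneg (h : ∀ᶠ t in 𝓝[>] (0 : ℝ), 0 ≤ P.eval t)
    (h0 : P.coeff 0 = 0) : ∀ᶠ t in 𝓝[>] (0 : ℝ), 0 ≤ P.divX.eval t := by
  filter_upwards [h, self_mem_nhdsWithin] with t ht (htpos : 0 < t)
  rw [← X_mul_divX_add P, h0] at ht
  simp only [map_zero, add_zero, eval_mul, eval_X] at ht
  exact nonneg_of_mul_nonneg_right ht htpos

theorem coeff_one_nonneg_of_eventually_nonneg (h : ∀ᶠ t in 𝓝[>] (0 : ℝ), 0 ≤ P.eval t)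
    (h0 : P.coeff 0 = 0) : 0 ≤ P.coeff 1 := by
  simpa [coeff_divX] using coeff_zero_nonneg_of_eventually_nonneg (eventually_divX_nonneg h h0)

theorem coeff_two_nonneg_of_eventually_nonneg (h : ∀ᶠ t in 𝓝[>] (0 : ℝ), 0 ≤ P.eval t)
    (h0 : P.coeff 0 = 0) (h1 : P.coeff 1 = 0) : 0 ≤ P.coeff 2 := by
  have h' := eventually_divX_nonneg (eventually_divX_nonneg h h0) (by rwa [coeff_divX])
  simpa [coeff_divX] using coeff_zero_nonneg_of_eventually_nonneg h'

end Polynomial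

namespace MvPolynomial

variable {σ R : Type*} [CommRing R]

theorem eval_pderiv_eq_zero_of_mem_span_X_sub_C_sq {x : σ → R} {q : MvPolynomial σ R}
    (hq : q ∈ Ideal.span (Set.range fun i => X i - C (x i)) ^ 2) :
    eval x q = 0 ∧ ∀ i, eval x (pderiv i q) = 0 := by
  have hI : ∀ p ∈ Ideal.span (Set.range fun i => X i - C (x i)), eval x p = 0 := by
    suffices Ideal.span (Set.range fun i => X i - C (x i)) ≤ RingHom.ker (eval x) from
      fun p hp => this hp
    rw [Ideal.span_le]
    rintro _ ⟨i, rfl⟩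
    simp
  rw [pow_two] at hq
  refine Submodule.mul_induction_on hq (fun a ha b hb => ⟨?_, fun i => ?_⟩) ?_
  · rw [map_mul, hI a ha, zero_mul]
  · rw [Derivation.leibniz, map_add, smul_eq_mul, smul_eq_mul, map_mul, map_mul, hI a ha, hI b hb]
    ring
  · rintro a b ⟨ha, ha'⟩ ⟨hb, hb'⟩
    exact ⟨by rw [map_add, ha, hb, add_zero],
      fun i => by rw [map_add, map_add, ha' i, hb' i, add_zero]⟩

noncomputable def lineRestrict (x w : σ → R) : MvPolynomial σ R →ₐ[R] Polynomial R :=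
  aeval fun i => Polynomial.C (x i) + Polynomial.C (w i) * Polynomial.X

variable (x w : σ → R)

theorem eval_lineRestrict (p : MvPolynomial σ R) (t : R) :
    (lineRestrict x w p).eval t = eval (x + t • w) p := by
  rw [lineRestrict, ← Polynomial.coe_aeval_eq_eval, ← AlgHom.comp_apply, comp_aeval,
    aeval_eq_eval]
  congr 2
  funext i
  simp only [map_add, map_mul, Polynomial.aeval_X, Polynomial.aeval_C, Algebra.algebraMap_self,
    RingHom.id_apply, Pi.add_apply, Pi.smul_apply, smul_eq_mul]
  ring

theorem derivative_lineRestrict [Fintype σ] (p : MvPolynomial σ R) :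
    Polynomial.derivative (lineRestrict x w p) =
      ∑ i, Polynomial.C (w i) * lineRestrict x w (pderiv i p) := by
  induction p using MvPolynomial.induction_on with
  | C a => simp [lineRestrict]
  | add p q hp hq => simp only [map_add, hp, hq, mul_add, Finset.sum_add_distrib]
  | mul_X p j hp =>
    classical
    simp only [map_mul, Polynomial.derivative_mul, hp, Derivation.leibniz, pderiv_X,
      Pi.single_apply]
    have hXj : lineRestrict x w (X j) = Polynomial.C (x j) + Polynomial.C (w j) * Polynomial.X :=
      aeval_X _ j
    simp only [smul_eq_mul, mul_one, mul_zero, map_add, map_mul, apply_ite, map_zero,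
      mul_add, Finset.sum_add_distrib, Finset.sum_ite_eq, Finset.mem_univ, if_true, hXj,
      Polynomial.derivative_C, Polynomial.derivative_C_mul_X]
    rw [Finset.sum_congr rfl fun i _ => mul_left_comm _ _ _, ← Finset.mul_sum]
    ring

end MvPolynomial

section LineRestriction

variable {n : ℕ}

theorem coeff_zero_lineRestrict (x w : Fin n → ℝ) (p : MvPolynomial (Fin n) ℝ) :
    (lineRestrict x w p).coeff 0 = eval x p := by
  rw [Polynomial.coeff_zero_eq_eval_zero, eval_lineRestrict, zero_smul, add_zero]

theorem coeff_one_lineRestrict (x w : Fin n → ℝ) (p : MvPolynomial (Fin n) ℝ) :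
    (lineRestrict x w p).coeff 1 = gradDot p x w := by
  have h := Polynomial.coeff_derivative (lineRestrict x w p) 0
  rw [derivative_lineRestrict, Polynomial.finsetSum_coeff] at h
  simp only [Polynomial.coeff_C_mul, coeff_zero_lineRestrict] at h
  simp [gradDot, h, mul_comm]

theorem two_mul_coeff_two_lineRestrict (x w : Fin n → ℝ) (p : MvPolynomial (Fin n) ℝ) :
    2 * (lineRestrict x w p).coeff 2 = hessQuad p x w := by
  calc 2 * (lineRestrict x w p).coeff 2
      = (Polynomial.derivative (Polynomial.derivative (lineRestrict x w p))).coeff 0 := by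
        rw [Polynomial.coeff_derivative, Polynomial.coeff_derivative]
        norm_num
        ring
    _ = ∑ a, ∑ b, w a * (w b * eval x (pderiv b (pderiv a p))) := by
        simp only [derivative_lineRestrict, Polynomial.derivative_sum,
          Polynomial.derivative_C_mul, Finset.mul_sum, Polynomial.finsetSum_coeff,
          Polynomial.coeff_C_mul, coeff_zero_lineRestrict]
    _ = hessQuad p x w := by
        rw [hessQuad, Finset.sum_comm]
        exact Finset.sum_congr rfl fun b _ => Finset.sum_congr rfl fun a _ => by ring

theorem gradDot_add (p q : MvPolynomial (Fin n) ℝ) (x w : Fin n → ℝ) :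
    gradDot (p + q) x w = gradDot p x w + gradDot q x w := by
  simp only [← coeff_one_lineRestrict, map_add, Polynomial.coeff_add]

theorem gradDot_sum {ι : Type*} (s : Finset ι) (f : ι → MvPolynomial (Fin n) ℝ)
    (x w : Fin n → ℝ) :
    gradDot (∑ i ∈ s, f i) x w = ∑ i ∈ s, gradDot (f i) x w := by
  simp only [← coeff_one_lineRestrict, map_sum, Polynomial.finsetSum_coeff]

theorem hessQuad_add (p q : MvPolynomial (Fin n) ℝ) (x v : Fin n → ℝ) :
    hessQuad (p + q) x v = hessQuad p x v + hessQuad q x v := by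
  simp only [← two_mul_coeff_two_lineRestrict, map_add, Polynomial.coeff_add, mul_add]

theorem hessQuad_sum {ι : Type*} (s : Finset ι) (f : ι → MvPolynomial (Fin n) ℝ)
    (x v : Fin n → ℝ) :
    hessQuad (∑ i ∈ s, f i) x v = ∑ i ∈ s, hessQuad (f i) x v := by
  simp only [← two_mul_coeff_two_lineRestrict, map_sum, Polynomial.finsetSum_coeff,
    Finset.mul_sum]

theorem gradDot_mul (p q : MvPolynomial (Fin n) ℝ) (x w : Fin n → ℝ) :
    gradDot (p * q) x w = eval x p * gradDot q x w + eval x q * gradDot p x w := by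
  simp only [gradDot, Finset.mul_sum, ← Finset.sum_add_distrib, Derivation.leibniz, smul_eq_mul,
    map_add, map_mul]
  exact Finset.sum_congr rfl fun i _ => by ring

theorem hessQuad_mul_of_eval_pderiv_eq_zero {p : MvPolynomial (Fin n) ℝ} {x : Fin n → ℝ}
    (h0 : eval x p = 0) (h1 : ∀ i, eval x (pderiv i p) = 0) (q : MvPolynomial (Fin n) ℝ)
    (v : Fin n → ℝ) : hessQuad (p * q) x v = eval x q * hessQuad p x v := by
  simp only [hessQuad, Finset.mul_sum]
  refine Finset.sum_congr rfl fun a _ => Finset.sum_congr rfl fun b _ => ?_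
  simp only [Derivation.leibniz, smul_eq_mul, map_add, map_mul, h0, h1]
  ring

theorem hessQuad_sq_of_eval_eq_zero {p : MvPolynomial (Fin n) ℝ} {x : Fin n → ℝ}
    (h : eval x p = 0) (v : Fin n → ℝ) : hessQuad (p ^ 2) x v = 2 * gradDot p x v ^ 2 := by
  rw [sq (gradDot p x v), gradDot, Finset.sum_mul_sum, Finset.mul_sum, hessQuad]
  refine Finset.sum_congr rfl fun a _ => ?_
  rw [Finset.mul_sum]
  refine Finset.sum_congr rfl fun b _ => ?_
  simp only [pow_two, Derivation.leibniz, smul_eq_mul, map_add, map_mul, h]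
  ring

end LineRestriction

namespace IsSOS

variable {A B : Type*} [CommRing A] [CommRing B] [LinearOrder B] [IsStrictOrderedRing B] {p : A}

theorem map_nonneg (hp : IsSOS p) (f : A →+* B) : 0 ≤ f p := by
  obtain ⟨k, q, rfl⟩ := hp
  simp only [map_sum, map_pow]
  exact Finset.sum_nonneg fun j _ => sq_nonneg _

theorem exists_eq_sum_sq_of_map_eq_zero (hp : IsSOS p) {f : A →+* B} (h : f p = 0) :
    ∃ (k : ℕ) (q : Fin k → A), p = ∑ j, q j ^ 2 ∧ ∀ j, f (q j) = 0 := by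
  obtain ⟨k, q, rfl⟩ := hp
  simp only [map_sum, map_pow] at h
  have hsq := (Finset.sum_eq_zero_iff_of_nonneg fun j _ => sq_nonneg (f (q j))).1 h
  exact ⟨k, q, rfl, fun j => pow_eq_zero_iff two_ne_zero |>.1 (hsq j (Finset.mem_univ j))⟩

variable {σ : Type*} {n : ℕ}

theorem eval_pderiv_eq_zero {p : MvPolynomial σ ℝ} (hp : IsSOS p) {x : σ → ℝ}
    (h : eval x p = 0) (i : σ) : eval x (pderiv i p) = 0 := by
  obtain ⟨k, q, rfl, hq⟩ := hp.exists_eq_sum_sq_of_map_eq_zero h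
  simp [pow_two, Derivation.leibniz, hq]

theorem gradDot_eq_zero {p : MvPolynomial (Fin n) ℝ} (hp : IsSOS p) {x : Fin n → ℝ}
    (h : eval x p = 0) (w : Fin n → ℝ) : gradDot p x w = 0 := by
  simp [gradDot, hp.eval_pderiv_eq_zero h]

theorem hessQuad_nonneg {p : MvPolynomial (Fin n) ℝ} (hp : IsSOS p) {x : Fin n → ℝ}
    (h : eval x p = 0) (v : Fin n → ℝ) : 0 ≤ hessQuad p x v := by
  obtain ⟨k, q, rfl, hq⟩ := hp.exists_eq_sum_sq_of_map_eq_zero h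
  rw [hessQuad_sum]
  exact Finset.sum_nonneg fun j _ => by rw [hessQuad_sq_of_eval_eq_zero (hq j)]; positivity

theorem gradDot_mul_eq_zero_or_pos {s g : MvPolynomial (Fin n) ℝ} (hs : IsSOS s)
    {x w : Fin n → ℝ}
    (hsg : eval x s * eval x g = 0) (hg : eval x g = 0 → 0 < gradDot g x w) :
    eval x s = 0 ∧ gradDot (s * g) x w = 0 ∨ 0 < gradDot (s * g) x w := by
  rw [gradDot_mul]
  rcases (hs.map_nonneg (eval x)).eq_or_lt with hs0 | hs0
  · rw [← hs0, hs.gradDot_eq_zero hs0.symm]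
    simp
  · have hg0 : eval x g = 0 := (mul_eq_zero.1 hsg).resolve_left hs0.ne'
    rw [hg0, zero_mul, add_zero]
    exact Or.inr (mul_pos hs0 (hg hg0))

end IsSOS

theorem StrictQuasiconcaveAt.gradDot_pos {n : ℕ} {g : MvPolynomial (Fin n) ℝ}
    {x y : Fin n → ℝ} (hqc : StrictQuasiconcaveAt g x) (hgx : eval x g = 0)
    (hseg : ∀ z ∈ segment ℝ x y, 0 ≤ eval z g) (hxy : y ≠ x) :
    0 < gradDot g x (y - x) := by
  set P := lineRestrict x (y - x) g
  have hP : ∀ᶠ t in 𝓝[>] (0 : ℝ), 0 ≤ P.eval t := by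
    filter_upwards [Ioc_mem_nhdsGT one_pos] with t ht
    rw [eval_lineRestrict]
    exact hseg _ (segment_eq_image' ℝ x y ▸ ⟨t, Set.Ioc_subset_Icc_self ht, rfl⟩)
  have hP0 : P.coeff 0 = 0 := (coeff_zero_lineRestrict _ _ g).trans hgx
  rw [← coeff_one_lineRestrict]
  refine (P.coeff_one_nonneg_of_eventually_nonneg hP hP0).lt_of_ne' fun hP1 => ?_
  have hneg := hqc (y - x) (sub_ne_zero.2 hxy) ((coeff_one_lineRestrict _ _ g).symm.trans hP1)
  have hP2 := P.coeff_two_nonneg_of_eventually_nonneg hP hP0 hP1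
  rw [← two_mul_coeff_two_lineRestrict] at hneg
  linarith

theorem eval_sos_multipliers_eq_zero {n : ℕ} {ι : Type*} [Fintype ι]
    {σ₀ : MvPolynomial (Fin n) ℝ} {σ g : ι → MvPolynomial (Fin n) ℝ} (hσ₀ : IsSOS σ₀)
    (hσ : ∀ i, IsSOS (σ i)) {x w : Fin n → ℝ} (hg : ∀ i, 0 ≤ eval x (g i))
    (hgrad : ∀ i, eval x (g i) = 0 → 0 < gradDot (g i) x w)
    (hq0 : eval x (σ₀ + ∑ i, σ i * g i) = 0) (hq1 : gradDot (σ₀ + ∑ i, σ i * g i) x w = 0) :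
    eval x σ₀ = 0 ∧ ∀ i, eval x (σ i) = 0 := by
  have hterm : ∀ i ∈ Finset.univ, 0 ≤ eval x (σ i) * eval x (g i) :=
    fun i _ => mul_nonneg ((hσ i).map_nonneg (eval x)) (hg i)
  simp only [map_add, map_sum, map_mul] at hq0
  obtain ⟨hσ₀x, hsum⟩ :=
    (add_eq_zero_iff_of_nonneg (hσ₀.map_nonneg (eval x)) (Finset.sum_nonneg hterm)).1 hq0
  have hcases i := (hσ i).gradDot_mul_eq_zero_or_pos (w := w)
    ((Finset.sum_eq_zero_iff_of_nonneg hterm).1 hsum i (Finset.mem_univ i)) (hgrad i)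
  have hgrad_nonneg : ∀ i ∈ Finset.univ, 0 ≤ gradDot (σ i * g i) x w := fun i _ =>
    (hcases i).elim (fun h => h.2.ge) le_of_lt
  rw [gradDot_add, gradDot_sum, hσ₀.gradDot_eq_zero hσ₀x, zero_add,
    Finset.sum_eq_zero_iff_of_nonneg hgrad_nonneg] at hq1
  exact ⟨hσ₀x, fun i =>
    (hcases i).elim And.left fun h => absurd (hq1 i (Finset.mem_univ i)) h.ne'⟩

theorem statement_19_general {n m : ℕ} (g : Fin m → MvPolynomial (Fin n) ℝ)
    (x : Fin n → ℝ) (hx : x ∈ Sset g) (y : Fin n → ℝ) (hxy : y ≠ x)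
    (hseg : segment ℝ x y ⊆ Sset g)
    (hqc : ∀ i, eval x (g i) = 0 → StrictQuasiconcaveAt (g i) x)
    (v : Fin n → ℝ) :
    ∀ q ∈ QModGen g,
      q ∈ (Ideal.span (Set.range fun i => X i - C (x i)) :
        Ideal (MvPolynomial (Fin n) ℝ)) ^ 2 →
      0 ≤ hessQuad q x v := by
  rintro q ⟨σ₀, σ, hσ₀, hσ, rfl⟩ hq
  obtain ⟨hq0, hq1⟩ := eval_pderiv_eq_zero_of_mem_span_X_sub_C_sq hq
  have hgrad : ∀ i, eval x (g i) = 0 → 0 < gradDot (g i) x (y - x) := fun i hi =>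
    (hqc i hi).gradDot_pos hi (fun z hz => hseg hz i) hxy
  obtain ⟨hσ₀x, hσx⟩ := eval_sos_multipliers_eq_zero hσ₀ hσ hx hgrad hq0
    (Finset.sum_eq_zero fun j _ => by rw [hq1 j, zero_mul])
  rw [hessQuad_add, hessQuad_sum]
  refine add_nonneg (hσ₀.hessQuad_nonneg hσ₀x v) (Finset.sum_nonneg fun i _ => ?_)
  rw [hessQuad_mul_of_eval_pderiv_eq_zero (hσx i) ((hσ i).eval_pderiv_eq_zero (hσx i))]
  exact mul_nonneg (hx i) ((hσ i).hessQuad_nonneg (hσx i) v)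

theorem statement_19 {n m : ℕ} (g : Fin m → MvPolynomial (Fin n) ℝ)
    (x : Fin n → ℝ) (hx : x ∈ Sset g) (y : Fin n → ℝ) (hy : y ∈ Sset g) (hxy : y ≠ x)
    (hseg : segment ℝ x y ⊆ Sset g)
    (hqc : ∀ i, eval x (g i) = 0 → StrictQuasiconcaveAt (g i) x)
    (v : Fin n → ℝ) :
    ∀ q ∈ QModGen g,
      q ∈ (Ideal.span (Set.range fun i => X i - C (x i)) :
        Ideal (MvPolynomial (Fin n) ℝ)) ^ 2 →
      0 ≤ hessQuad q x v :=
  statement_19_general g x hx y hxy hseg hqc v
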